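/- Let X be a reflexive Banach space that is λ-subprojective. Then X* is (1+λ)-superprojective: for every infinite-codimensional closed subspace M of X*, there exists a closed subspace N ⊇ M of infinite codimension that is (1+λ)-complemented in X*. -/

import Mathlib

open NormedSpace Metric Set Filter
open scoped ENNReal

noncomputable section

/-- Hausdorff measure of noncompactness of a set. -/
def hchi {Y : Type*} [SeminormedAddCommGroup Y] (A : Set Y) : ℝ :=
  sInf { r : ℝ | ∃ F : Finset Y, ∀ a ∈ A, ∃ y ∈ F, dist a y ≤ r }

variable {X Y Z : Type*} [NormedAddCommGroup X] [NormedSpace ℝ X]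
  [NormedAddCommGroup Y] [NormedSpace ℝ Y]

/-- χ(T) = Hausdorff measure of noncompactness of T(B_X). -/
def chiOp (T : X →L[ℝ] Y) : ℝ := hchi (T '' closedBall 0 1)

/-- SS(T): the quantity measuring strict singularity. -/
def SS (T : X →L[ℝ] Y) : ℝ :=
  sSup { c : ℝ | ∃ M : Submodule ℝ X, IsClosed (M : Set X) ∧ ¬ FiniteDimensional ℝ M ∧
      c = sInf { r : ℝ | ∃ x ∈ M, ‖x‖ = 1 ∧ r = ‖T x‖ } }

/-- SS_Z(T): the quantity measuring Z-strict singularity. -/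
def SSZ (Z : Type*) [NormedAddCommGroup Z] [NormedSpace ℝ Z] (T : X →L[ℝ] Y) : ℝ :=
  sSup { r : ℝ | ∃ R : Z →L[ℝ] X, ∃ c : ℝ, 0 < c ∧ (∀ z, c * ‖z‖ ≤ ‖T (R z)‖) ∧ r = c / ‖R‖ }

/-- The adjoint (dual) operator T* : Y* → X*. -/
def adjOp (T : X →L[ℝ] Y) : StrongDual ℝ Y →L[ℝ] StrongDual ℝ X :=
  (ContinuousLinearMap.compL ℝ X Y ℝ).flip T

/-- δ(S) for a (surjective) map S: the supremum of δ > 0 with δ·B ⊆ S(B). -/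
def deltaQ {W : Type*} [SeminormedAddCommGroup W] (S : X → W) : ℝ :=
  sSup { d : ℝ | 0 < d ∧ ∀ w : W, ‖w‖ ≤ d → ∃ x : X, ‖x‖ ≤ 1 ∧ S x = w }

/-- SCS(T): the quantity measuring strict cosingularity. -/
def SCS (T : X →L[ℝ] Y) : ℝ :=
  sSup { r : ℝ | ∃ N : Submodule ℝ Y, IsClosed (N : Set Y) ∧ ¬ FiniteDimensional ℝ (Y ⧸ N) ∧
      Function.Surjective (fun x : X => (Submodule.Quotient.mk (T x) : Y ⧸ N)) ∧
      r = deltaQ (fun x : X => (Submodule.Quotient.mk (T x) : Y ⧸ N)) }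

/-- SCS_Z(T): the quantity measuring Z-strict cosingularity. -/
def SCSZ (Z : Type*) [NormedAddCommGroup Z] [NormedSpace ℝ Z] (T : X →L[ℝ] Y) : ℝ :=
  sSup { r : ℝ | ∃ S : Y →L[ℝ] Z, Function.Surjective (fun x : X => S (T x)) ∧
      r = deltaQ (fun x : X => S (T x)) / ‖S‖ }

/-- The annihilator M^⊥ in the continuous dual. -/
def annih (M : Submodule ℝ X) : Submodule ℝ (StrongDual ℝ X) where
  carrier := { f | ∀ x ∈ M, f x = 0 }
  add_mem' := by intro f g hf hg x hx; simp [hf x hx, hg x hx]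
  zero_mem' := by intro x _; simp
  smul_mem' := by intro c f hf x hx; simp [hf x hx]

/-- The quantity wk_Z(A) measuring weak non-compactness. -/
def wkk (Z : Type*) [NormedAddCommGroup Z] [NormedSpace ℝ Z] (A : Set Z) : ℝ :=
  sSup { r : ℝ | ∃ φ : StrongDual ℝ (StrongDual ℝ Z),
      StrongDual.toWeakDual φ ∈ closure (StrongDual.toWeakDual '' (inclusionInDoubleDual ℝ Z '' A)) ∧
      r = Metric.infDist φ (Set.range (inclusionInDoubleDual ℝ Z)) }

/-- A Banach space is λ-subprojective. -/
def Subprojective (lam : ℝ) (Y : Type*) [NormedAddCommGroup Y] [NormedSpace ℝ Y] : Prop :=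
  ∀ M : Submodule ℝ Y, IsClosed (M : Set Y) → ¬ FiniteDimensional ℝ M →
    ∃ N : Submodule ℝ Y, N ≤ M ∧ IsClosed (N : Set Y) ∧ ¬ FiniteDimensional ℝ N ∧
      ∃ P : Y →L[ℝ] Y, ‖P‖ ≤ lam ∧ LinearMap.range (P : Y →ₗ[ℝ] Y) = N ∧ ∀ y, P (P y) = P y

/-- A Banach space is λ-superprojective. -/
def Superprojective (lam : ℝ) (Y : Type*) [NormedAddCommGroup Y] [NormedSpace ℝ Y] : Prop :=
  ∀ M : Submodule ℝ Y, IsClosed (M : Set Y) → ¬ FiniteDimensional ℝ (Y ⧸ M) →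
    ∃ N : Submodule ℝ Y, M ≤ N ∧ IsClosed (N : Set Y) ∧ ¬ FiniteDimensional ℝ (Y ⧸ N) ∧
      ∃ P : Y →L[ℝ] Y, ‖P‖ ≤ lam ∧ LinearMap.range (P : Y →ₗ[ℝ] Y) = N ∧ ∀ y, P (P y) = P y

end

/-!
Reflexivity identifies every closed subspace `M` of `X*` with the annihilator of its
pre-annihilator `⊥M`, so `M` has infinite codimension exactly when `⊥M` is infinite-dimensional.
Subprojectivity then yields a projection `P` of norm `≤ λ` onto an infinite-dimensional
`N ⊆ ⊥M`, and `1 - P*` is a projection of norm `≤ 1 + λ` onto `N^⊥ ⊇ M`, which again has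
infinite codimension because `N` is infinite-dimensional.
-/

section Annihilator

variable {E : Type*} [NormedAddCommGroup E] [NormedSpace ℝ E]

def dualRestrict (N : Submodule ℝ E) : StrongDual ℝ E →ₗ[ℝ] Module.Dual ℝ N :=
  LinearMap.domRestrict' N ∘ₗ ContinuousLinearMap.coeLM ℝ

@[simp]
lemma dualRestrict_apply (N : Submodule ℝ E) (f : StrongDual ℝ E) (x : N) :
    dualRestrict N f x = f x :=
  rfl

lemma ker_dualRestrict (N : Submodule ℝ E) : LinearMap.ker (dualRestrict N) = annih N := by
  ext f
  simp [LinearMap.ext_iff, annih]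

lemma isClosed_annih (N : Submodule ℝ E) : IsClosed (annih N : Set (StrongDual ℝ E)) := by
  have : (annih N : Set (StrongDual ℝ E)) = ⋂ x ∈ N, {f | f x = 0} := by
    ext f; simp [annih]
  rw [this]
  exact isClosed_biInter fun x _ => isClosed_eq (ContinuousLinearMap.apply ℝ ℝ x).continuous
    continuous_const

lemma finiteDimensional_quotient_annih (N : Submodule ℝ E) [FiniteDimensional ℝ N] :
    FiniteDimensional ℝ (StrongDual ℝ E ⧸ annih N) :=
  have : FiniteDimensional ℝ (StrongDual ℝ E ⧸ LinearMap.ker (dualRestrict N)) :=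
    .equiv (dualRestrict N).quotKerEquivRange.symm
  .equiv (Submodule.quotEquivOfEq _ _ (ker_dualRestrict N))

-- Points of `N` act on `E* ⧸ N^⊥` as functionals, injectively by Hahn–Banach.
lemma finiteDimensional_of_quotient_annih (N : Submodule ℝ E)
    [FiniteDimensional ℝ (StrongDual ℝ E ⧸ annih N)] : FiniteDimensional ℝ N := by
  refine .of_injective ((annih N).liftQ (dualRestrict N) (ker_dualRestrict N).ge).flip ?_
  rw [← LinearMap.ker_eq_bot, Submodule.eq_bot_iff]
  intro x hx
  refine Subtype.ext (SeparatingDual.eq_zero_of_forall_dual_eq_zero (R := ℝ) fun f => ?_)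
  simpa using LinearMap.congr_fun hx (Submodule.Quotient.mk f)

lemma exists_mem_annih_apply_ne_zero {M : Submodule ℝ E} (hM : IsClosed (M : Set E)) {f : E}
    (hf : f ∉ M) : ∃ φ ∈ annih M, φ f ≠ 0 := by
  have : IsClosed (M : Set E) := hM
  obtain ⟨ψ, hψ⟩ :=
    SeparatingDual.exists_ne_zero (R := ℝ) ((Submodule.Quotient.mk_eq_zero M).not.mpr hf)
  exact ⟨ψ.comp M.mkQL, fun g hg => by simp [(Submodule.Quotient.mk_eq_zero M).mpr hg], hψ⟩

end Annihilator

section Reflexive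

variable {X : Type*} [NormedAddCommGroup X] [NormedSpace ℝ X]

noncomputable def preAnnih (M : Submodule ℝ (StrongDual ℝ X)) : Submodule ℝ X :=
  (annih M).comap (inclusionInDoubleDual ℝ X : X →ₗ[ℝ] StrongDual ℝ (StrongDual ℝ X))

lemma mem_preAnnih {M : Submodule ℝ (StrongDual ℝ X)} {x : X} :
    x ∈ preAnnih M ↔ ∀ f ∈ M, f x = 0 :=
  Iff.rfl

lemma isClosed_preAnnih (M : Submodule ℝ (StrongDual ℝ X)) : IsClosed (preAnnih M : Set X) :=
  (isClosed_annih M).preimage (inclusionInDoubleDual ℝ X).continuous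

lemma annih_preAnnih_of_surjective (hrefl : Function.Surjective (inclusionInDoubleDual ℝ X))
    {M : Submodule ℝ (StrongDual ℝ X)} (hM : IsClosed (M : Set (StrongDual ℝ X))) :
    annih (preAnnih M) = M := by
  refine le_antisymm (fun f hf => ?_) fun f hf x hx => mem_preAnnih.mp hx f hf
  by_contra hfM
  obtain ⟨φ, hφM, hφf⟩ := exists_mem_annih_apply_ne_zero hM hfM
  obtain ⟨x, rfl⟩ := hrefl φ
  exact hφf (hf x hφM)

end Reflexive

section Adjoint

variable {E F G : Type*} [NormedAddCommGroup E] [NormedSpace ℝ E] [NormedAddCommGroup F]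
  [NormedSpace ℝ F] [NormedAddCommGroup G] [NormedSpace ℝ G]

@[simp]
lemma adjOp_apply (T : E →L[ℝ] F) (f : StrongDual ℝ F) (x : E) : adjOp T f x = f (T x) :=
  rfl

lemma norm_adjOp_le (T : E →L[ℝ] F) : ‖adjOp T‖ ≤ ‖T‖ :=
  ContinuousLinearMap.opNorm_le_bound _ (norm_nonneg T) fun f =>
    (f.opNorm_comp_le T).trans_eq (mul_comm _ _)

lemma adjOp_comp (S : F →L[ℝ] G) (T : E →L[ℝ] F) :
    adjOp (S ∘L T) = adjOp T ∘L adjOp S :=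
  rfl

lemma ker_adjOp (T : E →L[ℝ] F) :
    LinearMap.ker (adjOp T : StrongDual ℝ F →ₗ[ℝ] StrongDual ℝ E) =
      annih (LinearMap.range (T : E →ₗ[ℝ] F)) := by
  ext f
  simp [ContinuousLinearMap.ext_iff, annih]

lemma IsIdempotentElem.adjOp {P : E →L[ℝ] E} (hP : IsIdempotentElem P) :
    IsIdempotentElem (adjOp P) :=
  (adjOp_comp P P).symm.trans (congrArg _ hP)

lemma exists_projection_onto_annih_range {P : E →L[ℝ] E} (hP : IsIdempotentElem P) :
    ∃ Q : StrongDual ℝ E →L[ℝ] StrongDual ℝ E, ‖Q‖ ≤ 1 + ‖P‖ ∧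
      LinearMap.range (Q : StrongDual ℝ E →ₗ[ℝ] StrongDual ℝ E) =
        annih (LinearMap.range (P : E →ₗ[ℝ] E)) ∧
      IsIdempotentElem Q := by
  have hP' : IsIdempotentElem (adjOp P) := hP.adjOp
  refine ⟨1 - adjOp P, ?_, ?_,
    IsIdempotentElem.one_sub (R := StrongDual ℝ E →L[ℝ] StrongDual ℝ E) hP'⟩
  · calc ‖1 - adjOp P‖
        ≤ ‖(1 : StrongDual ℝ E →L[ℝ] StrongDual ℝ E)‖ + ‖adjOp P‖ :=
          norm_sub_le (E := StrongDual ℝ E →L[ℝ] StrongDual ℝ E) _ _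
      _ ≤ 1 + ‖P‖ := add_le_add ContinuousLinearMap.norm_id_le (norm_adjOp_le P)
  · rw [← ker_adjOp, LinearMap.IsIdempotentElem.ker_eq_range_one_sub
      (ContinuousLinearMap.isIdempotentElem_toLinearMap_iff.mpr hP')]
    rfl

end Adjoint

theorem stmt15_general {X : Type*} [NormedAddCommGroup X] [NormedSpace ℝ X]
    (hrefl : Function.Surjective (inclusionInDoubleDual ℝ X))
    (lam : ℝ) (h : Subprojective lam X) :
    Superprojective (1 + lam) (StrongDual ℝ X) := by
  intro M hM hMcodim
  have hpre : ¬ FiniteDimensional ℝ (preAnnih M) := fun _ =>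
    hMcodim (annih_preAnnih_of_surjective hrefl hM ▸ finiteDimensional_quotient_annih _)
  obtain ⟨N, hNM, -, hN, P, hPnorm, rfl, hPidem⟩ := h (preAnnih M) (isClosed_preAnnih M) hpre
  obtain ⟨Q, hQnorm, hQrange, hQidem⟩ :=
    exists_projection_onto_annih_range (ContinuousLinearMap.ext hPidem)
  refine ⟨annih (LinearMap.range (P : X →ₗ[ℝ] X)),
    fun f hf x hx => mem_preAnnih.mp (hNM hx) f hf,
    isClosed_annih _, fun _ => hN (finiteDimensional_of_quotient_annih _), Q, by linarith,
    hQrange, fun f => congr($hQidem f)⟩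

theorem stmt15 {X : Type*} [NormedAddCommGroup X] [NormedSpace ℝ X] [CompleteSpace X]
    (hrefl : Function.Surjective (inclusionInDoubleDual ℝ X))
    (lam : ℝ) (hlam : 1 ≤ lam) (h : Subprojective lam X) :
    Superprojective (1 + lam) (StrongDual ℝ X) :=
  stmt15_general hrefl lam h
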